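/- Let A be an m × n real matrix and b ∈ ℝ^m, and let P = {x ∈ ℝ^n : x ≥ 0 componentwise and A·x = b}. If x is an extreme point of P, then the columns of A indexed by the support {j : x_j ≠ 0} are linearly independent; in particular, the number of nonzero coordinates of x is at most m. -/

import Mathlib

/-! If a nonzero `c` supported on the support of `x` had `A c = 0`, then `x ± t c` would stay in
`P` for all small `t`: the coordinates outside the support do not move and those inside it are
positive. So `x` would be the midpoint of two distinct points of `P`. The bound on the support
follows because independent vectors in `ℝᵐ` number at most `m`. -/

open Filter Topology Matrix

theorem eq_zero_of_add_mem_of_sub_mem_of_mem_extremePoints {𝕜 E : Type*} [Field 𝕜]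
    [LinearOrder 𝕜] [IsStrictOrderedRing 𝕜] [AddCommGroup E] [Module 𝕜 E] {C : Set E} {x v : E}
    (hx : x ∈ C.extremePoints 𝕜) (hadd : x + v ∈ C) (hsub : x - v ∈ C) : v = 0 :=
  add_eq_left.mp <| hx.2 hadd hsub (mem_openSegment_add_sub x v)

theorem eq_zero_of_mem_extremePoints_of_eventually_add_smul_mem {E : Type*} [AddCommGroup E]
    [Module ℝ E] {C : Set E} {x v : E} (hx : x ∈ C.extremePoints ℝ)
    (hv : ∀ᶠ t : ℝ in 𝓝 0, x + t • v ∈ C) : v = 0 := by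
  have hneg : ∀ᶠ t : ℝ in 𝓝 0, x - t • v ∈ C := by
    simpa [sub_eq_add_neg] using (continuous_neg.tendsto' 0 0 neg_zero).eventually hv
  obtain ⟨t, ⟨hadd, hsub⟩, ht⟩ := ((hv.and hneg).filter_mono nhdsWithin_le_nhds).and
    (eventually_mem_nhdsWithin (s := {0}ᶜ)) |>.exists
  exact (smul_eq_zero.mp <| eq_zero_of_add_mem_of_sub_mem_of_mem_extremePoints hx hadd hsub)
    |>.resolve_left ht

theorem eventually_nonneg_add_smul {ι : Type*} [Finite ι] {x c : ι → ℝ} (hx : 0 ≤ x)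
    (hc : ∀ j, x j = 0 → c j = 0) : ∀ᶠ t : ℝ in 𝓝 0, 0 ≤ x + t • c := by
  simp only [Pi.le_def, eventually_all]
  intro j
  rcases (hx j).eq_or_lt with hxj | hxj
  · simp [← hxj, hc j hxj.symm]
  · have hcont : Continuous fun t : ℝ => x j + t * c j := by fun_prop
    filter_upwards [(hcont.tendsto' 0 (x j) (by simp)).eventually (lt_mem_nhds hxj)] with t ht
    simpa using ht.le

namespace Matrix

variable {m n : Type*} [Fintype n]

theorem mulVec_eq_linearCombination_transpose {R : Type*} [CommSemiring R] (A : Matrix m n R)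
    (l : n →₀ R) : A *ᵥ ⇑l = Finsupp.linearCombination R Aᵀ l := by
  simp only [mulVec_eq_sum, op_smul_eq_smul]
  exact ((Finsupp.linearCombination_apply R l).trans
    (Finsupp.sum_fintype _ _ fun _ => zero_smul R _)).symm

theorem eq_zero_of_mem_extremePoints_of_mulVec_eq_zero {A : Matrix m n ℝ} {b : m → ℝ}
    {x c : n → ℝ} (hx : x ∈ {y | 0 ≤ y ∧ A *ᵥ y = b}.extremePoints ℝ) (hAc : A *ᵥ c = 0)
    (hc : ∀ j, x j = 0 → c j = 0) : c = 0 := by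
  refine eq_zero_of_mem_extremePoints_of_eventually_add_smul_mem hx ?_
  filter_upwards [eventually_nonneg_add_smul hx.1.1 hc] with t ht
  exact ⟨ht, by rw [mulVec_add, mulVec_smul, hAc, smul_zero, add_zero, hx.1.2]⟩

theorem linearIndepOn_transpose_of_mem_extremePoints {A : Matrix m n ℝ} {b : m → ℝ}
    {x : n → ℝ} (hx : x ∈ {y | 0 ≤ y ∧ A *ᵥ y = b}.extremePoints ℝ) :
    LinearIndepOn ℝ Aᵀ {j | x j ≠ 0} := by
  refine linearIndepOn_iff.mpr fun l hl hAl => DFunLike.coe_injective ?_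
  refine eq_zero_of_mem_extremePoints_of_mulVec_eq_zero hx
    (by rw [mulVec_eq_linearCombination_transpose, hAl]) fun j hxj => ?_
  exact (Finsupp.mem_supported' _ _).mp hl j (by simpa using hxj)

end Matrix

/-- **Extreme points of `{x ≥ 0, A x = b}` have linearly independent support columns.**
If `x` is an extreme point of `P = {x : ℝⁿ | x ≥ 0, A x = b}`, then the columns of `A`
indexed by the support of `x` are linearly independent; in particular, the support has at
most `m` elements. -/
theorem extremePoint_support_columns_linearIndependent
    (m n : ℕ) (A : Matrix (Fin m) (Fin n) ℝ) (b : Fin m → ℝ)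
    (P : Set (Fin n → ℝ))
    (hP : P = {x | (∀ j, 0 ≤ x j) ∧ A.mulVec x = b})
    (x : Fin n → ℝ) (hx : x ∈ Set.extremePoints ℝ P) :
    LinearIndependent ℝ (fun j : {j : Fin n // x j ≠ 0} => fun i : Fin m => A i j.val) ∧
      Set.ncard {j : Fin n | x j ≠ 0} ≤ m := by
  subst hP
  have hli : LinearIndepOn ℝ Aᵀ {j | x j ≠ 0} := linearIndepOn_transpose_of_mem_extremePoints hx
  refine ⟨hli, ?_⟩
  rw [← Nat.card_coe_set_eq, Nat.card_eq_fintype_card]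
  simpa using hli.fintype_card_le_finrank
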